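/- Fix λ ∈ (0, λ₀). There exists a constant K₁(λ) ≥ 1, depending only on d, M₀, M₁, λ, with the following property. Let ω ∈ Ω, r ∈ ℕ, and suppose Σ_{m=−k+1}^{0} ξ_m(ω) > k(M₁ + λ + log(2d+1)) for all k ≥ r. Then for every c ≥ 1, every φ ∈ F(c), and every integer n > (log c)/λ + r + 1: sup_{|y| > r} (T^{−n,0}(ω)φ)(y) ≤ 2K₁(λ) · e^{−λ(r+1)} · (T^{−n,0}(ω)φ)(0). -/

import Mathlib

open MeasureTheory Filter

namespace BKpaper

abbrev X (d : ℕ) := Fin d → ℤ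

/-- the max-norm |x| = max_i |x_i|, as a natural number -/
def nm {d : ℕ} (x : X d) : ℕ := Finset.univ.sup fun i => (x i).natAbs

/-- spin value of a boolean: `true ↦ 1`, `false ↦ -1` -/
def sgn (b : Bool) : ℝ := if b then 1 else -1

/-- ξ_m(ω) = M₀ if ω_m = 1, ξ_m(ω) = −M₁ if ω_m = −1 -/
def xi (M₀ M₁ : ℝ) (ω : ℤ → Bool) (m : ℤ) : ℝ := if ω m then M₀ else -M₁

/-- one admissible step of the lazy random walk -/
def stepOK {d : ℕ} (x y : X d) : Prop := (∑ i, (y i - x i).natAbs) ≤ 1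

/-- admissible path on the (discrete) interval [n₁, n₂] -/
def Adm {d : ℕ} (n₁ n₂ : ℤ) (γ : ℤ → X d) : Prop :=
  ∀ n : ℤ, n₁ ≤ n → n < n₂ → stepOK (γ n) (γ (n + 1))

/-- a path frozen outside [n₁,n₂]; used to represent a path on [n₁,n₂] by a
function on all of ℤ -/
def Frozen {d : ℕ} (n₁ n₂ : ℤ) (γ : ℤ → X d) : Prop :=
  (∀ n : ℤ, n ≤ n₁ → γ n = γ n₁) ∧ (∀ n : ℤ, n₂ ≤ n → γ n = γ n₂)

/-- Φ_{n₁,n₂}(γ,ω) = Σ_{n=n₁+1}^{n₂} V(γ(n)) ω_n -/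
noncomputable def Phi {d : ℕ} (V : X d → ℝ) (ω : ℤ → Bool) (n₁ n₂ : ℤ) (γ : ℤ → X d) : ℝ :=
  ∑ n ∈ Finset.Icc (n₁ + 1) n₂, V (γ n) * sgn (ω n)

/-- the Feynman–Kac operator T^{n₁,n₂}(ω) -/
noncomputable def T {d : ℕ} (V : X d → ℝ) (ω : ℤ → Bool) (n₁ n₂ : ℤ)
    (u : X d → ℝ) (x : X d) : ℝ :=
  ((2 * (d : ℝ) + 1) ^ (n₂ - n₁))⁻¹ *
    ∑' γ : {γ : ℤ → X d // Adm n₁ n₂ γ ∧ Frozen n₁ n₂ γ ∧ γ n₂ = x},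
      Real.exp (Phi V ω n₁ n₂ γ.1) * u (γ.1 n₁)

/-- the partition function Z_{n₁,n₂}(x₁,x₂) -/
noncomputable def Z {d : ℕ} (V : X d → ℝ) (ω : ℤ → Bool) (n₁ n₂ : ℤ) (x₁ x₂ : X d) : ℝ :=
  ∑' γ : {γ : ℤ → X d // Adm n₁ n₂ γ ∧ Frozen n₁ n₂ γ ∧ γ n₁ = x₁ ∧ γ n₂ = x₂},
    Real.exp (Phi V ω n₁ n₂ γ.1)

/-- the class F(c): nonnegative bounded functions with sup φ ≤ c·φ(0) -/
def Fset (d : ℕ) (c : ℝ) : Set (X d → ℝ) :=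
  {φ | (∀ x, 0 ≤ φ x) ∧ ∀ x, φ x ≤ c * φ 0}

/-- P is the i.i.d. Bernoulli(1/2) product measure on {−1,1}^ℤ ≃ ℤ → Bool -/
def IsBernoulli (P : Measure (ℤ → Bool)) : Prop :=
  IsProbabilityMeasure P ∧ ∀ (s : Finset ℤ) (f : ℤ → Bool),
    P {ω | ∀ i ∈ s, ω i = f i} = (1 / 2 : ENNReal) ^ s.card

/-- the shift θ^k -/
def shift (k : ℤ) (ω : ℤ → Bool) : ℤ → Bool := fun n => ω (k + n)

/-- first standard basis vector e₁ of ℤ^d -/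
def e1 (d : ℕ) : X d := fun i => if (i : ℕ) = 0 then 1 else 0

/-- the optimal path γ*: γ*_n = 0 if ω_n = 1, γ*_n = e₁ if ω_n = −1 -/
def gstar (d : ℕ) (ω : ℤ → Bool) : ℤ → X d := fun n => if ω n then 0 else e1 d

/-- the pair (m₁,m₂) is (λ,r)-good for ω -/
def Good (d : ℕ) (M₀ M₁ lam : ℝ) (r : ℕ) (m₁ m₂ : ℤ) (ω : ℤ → Bool) : Prop :=
  m₁ < m₂ ∧
  (∀ j : ℤ, m₁ + 1 ≤ j → j ≤ m₁ + r → ω j = true) ∧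
  (∀ k : ℕ, 1 ≤ k →
    (k : ℝ) * (M₁ + lam + Real.log (2 * (d : ℝ) + 1)) <
      ∑ j ∈ Finset.Icc (m₁ + r + 1) (m₁ + r + k), xi M₀ M₁ ω j) ∧
  (∀ j : ℤ, m₂ - r + 1 ≤ j → j ≤ m₂ → ω j = true) ∧
  (∀ k : ℕ, 1 ≤ k →
    (k : ℝ) * (M₁ + lam + Real.log (2 * (d : ℝ) + 1)) <
      ∑ j ∈ Finset.Icc (m₂ - r - k + 1) (m₂ - r), xi M₀ M₁ ω j)

/-- the ball B_r ⊆ ℤ^d as a finite set -/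
noncomputable def ball (d r : ℕ) : Finset (X d) := Fintype.piFinset fun _ => Finset.Icc (-(r : ℤ)) (r : ℤ)

lemma ball_nonempty (d r : ℕ) : (ball d r).Nonempty :=
  ⟨fun _ => 0, by simp [ball, Fintype.mem_piFinset]⟩

/-- the Hilbert projective (pseudo)metric ρ_r on functions restricted to B_r -/
noncomputable def rho (d r : ℕ) (φ ψ : X d → ℝ) : ℝ :=
  Real.log ((ball d r).sup' (ball_nonempty d r) (fun x => φ x / ψ x) *
            (ball d r).sup' (ball_nonempty d r) (fun x => ψ x / φ x))

/-- diam_r of a set of functions w.r.t. ρ_r -/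
noncomputable def diamr (d r : ℕ) (A : Set (X d → ℝ)) : ℝ :=
  sSup {y | ∃ φ ∈ A, ∃ ψ ∈ A, y = rho d r φ ψ}

/-- the set G(λ,r) (with K₁ explicit): φ ∈ F(2K₁) with sup_{|x|>r} φ ≤ sup_{|x|≤r} φ -/
def Gset (d : ℕ) (K₁ : ℝ) (r : ℕ) : Set (X d → ℝ) :=
  {φ | φ ∈ Fset d (2 * K₁) ∧ ∀ x, r < nm x → ∃ z, nm z ≤ r ∧ φ x ≤ φ z}

/-- the set H(λ,r) (with K₁, K₂ explicit) -/
def Hset (d : ℕ) (K₁ K₂ : ℝ) (r : ℕ) : Set (X d → ℝ) :=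
  {φ | φ ∈ Gset d K₁ r ∧ (⨆ x, φ x) = 1 ∧ ∀ y, nm y ≤ r → 1 / K₂ ≤ φ y}

/-- finite-volume Gibbs measure on [n₁,n₂] for ω (paths represented as
functions ℤ → ℤ^d frozen outside [n₁,n₂]) -/
def FVGibbs (d : ℕ) (V : X d → ℝ) (ω : ℤ → Bool) (n₁ n₂ : ℤ)
    (μ : Measure (ℤ → X d)) : Prop :=
  IsProbabilityMeasure μ ∧
  μ {γ | Adm n₁ n₂ γ ∧ Frozen n₁ n₂ γ} = 1 ∧
  ∀ γ : ℤ → X d, Adm n₁ n₂ γ →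
    μ {α | α n₁ = γ n₁ ∧ α n₂ = γ n₂} ≠ 0 →
    μ {α | ∀ n : ℤ, n₁ ≤ n → n ≤ n₂ → α n = γ n} =
      ENNReal.ofReal (Real.exp (Phi V ω n₁ n₂ γ) / Z V ω n₁ n₂ (γ n₁) (γ n₂)) *
        μ {α | α n₁ = γ n₁ ∧ α n₂ = γ n₂}

/-- (infinite-volume) Gibbs measure for ω -/
def GibbsMeasure (d : ℕ) (V : X d → ℝ) (ω : ℤ → Bool) (μ : Measure (ℤ → X d)) : Prop :=
  IsProbabilityMeasure μ ∧
  μ {α | ∀ n : ℤ, stepOK (α n) (α (n + 1))} = 1 ∧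
  ∀ n₁ n₂ : ℤ, n₁ < n₂ → ∀ γ : ℤ → X d, Adm n₁ n₂ γ →
    μ {α | α n₁ = γ n₁ ∧ α n₂ = γ n₂} ≠ 0 →
    μ {α | ∀ n : ℤ, n₁ ≤ n → n ≤ n₂ → α n = γ n} =
      ENNReal.ofReal (Real.exp (Phi V ω n₁ n₂ γ) / Z V ω n₁ n₂ (γ n₁) (γ n₂)) *
        μ {α | α n₁ = γ n₁ ∧ α n₂ = γ n₂}

/-- the weak localization condition for a measure on two-sided paths -/
def WeakLoc (d : ℕ) (μ : Measure (ℤ → X d)) : Prop :=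
  ∀ ε : ℝ, 0 < ε → ∃ r : ℕ,
    Filter.liminf (fun n : ℤ => μ {α | r < nm (α n)}) Filter.atTop < ENNReal.ofReal ε ∧
    Filter.liminf (fun n : ℤ => μ {α | r < nm (α n)}) Filter.atBot < ENNReal.ofReal ε

/-- normalized positive eigenfunction of the cocycle T -/
def IsEigen (d : ℕ) (V : X d → ℝ) (P : Measure (ℤ → Bool))
    (u : (ℤ → Bool) → X d → ℝ) : Prop :=
  (∀ x : X d, Measurable fun ω => u ω x) ∧
  ∀ᵐ ω ∂P, (∀ x, 0 < u ω x) ∧ BddAbove (Set.range (u ω)) ∧ (⨆ x, u ω x) = 1 ∧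
    ∃ κ : ℝ, 0 < κ ∧ ∀ x, T V ω 0 1 (u ω) x = κ * u (shift 1 ω) x

/-!
Split the paths ending at `y` according to the time `-k` of their last visit to the origin;
`k > r` because `|y| > r`. After time `-k` the path avoids the origin, so it gains at most
`k M₁`, and it is one of at most `(2d+1)^k` walks. Before time `-k` it is a path ending at `0`,
and gluing the optimal path `γ*` to it on `(-k, 0]` yields a path ending at `0` while losing at
most a factor `exp (M₀ - M₁ - ∑_{-k < m ≤ 0} ξ_m)`. By the hypothesis on the partial sums of
`ξ`, the paths whose last visit is at `-k` contribute at most `exp (M₀ - M₁) e^{-λk}` times the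
sum over paths ending at `0`. The paths avoiding the origin are bounded through `φ ≤ c φ(0)`
and the constant path at `0`; since `n > log c / λ + r + 1` they contribute at most
`exp (M₀ - M₁) e^{-λ(r+1)}` times the same sum. A geometric series gives
`K₁ = exp (M₀ - M₁) / (1 - e^{-λ})`.
-/

lemma sum_le_mul_sum_of_card_fiber_le {ι κ : Type*} [DecidableEq κ] {s : Finset ι}
    {t : Finset κ} {f : ι → ℝ} {g : κ → ℝ} {p : ι → κ} {C : ℝ} {N : ℕ}
    (hp : ∀ i ∈ s, p i ∈ t) (hf : ∀ i ∈ s, f i ≤ C * g (p i))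
    (hN : ∀ j ∈ t, {i ∈ s | p i = j}.card ≤ N) (hC : 0 ≤ C) (hg : ∀ j ∈ t, 0 ≤ g j) :
    ∑ i ∈ s, f i ≤ N * C * ∑ j ∈ t, g j := by
  rw [← Finset.sum_fiberwise_of_maps_to hp, Finset.mul_sum]
  refine Finset.sum_le_sum fun j hj => ?_
  calc ∑ i ∈ s with p i = j, f i ≤ ∑ i ∈ s with p i = j, C * g j :=
        Finset.sum_le_sum fun i hi => by
          obtain ⟨his, rfl⟩ := Finset.mem_filter.1 hi
          exact hf i his
    _ = {i ∈ s | p i = j}.card * (C * g j) := by rw [Finset.sum_const, nsmul_eq_mul]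
    _ ≤ N * C * g j := by
        rw [mul_assoc]
        exact mul_le_mul_of_nonneg_right (by exact_mod_cast hN j hj) (mul_nonneg hC (hg j hj))

section Paths

variable {d : ℕ}

def unitSteps (d : ℕ) : Finset (X d) :=
  insert 0 ((Finset.univ : Finset (Fin d × Bool)).image
    fun p => Pi.single p.1 (if p.2 then 1 else -1))

lemma card_unitSteps_le : (unitSteps d).card ≤ 2 * d + 1 := by
  classical
  calc (unitSteps d).card
      ≤ ((Finset.univ : Finset (Fin d × Bool)).image
          fun p => (Pi.single p.1 (if p.2 then 1 else -1) : X d)).card + 1 :=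
        Finset.card_insert_le _ _
    _ ≤ Fintype.card (Fin d × Bool) + 1 := by gcongr; exact Finset.card_image_le
    _ = 2 * d + 1 := by simp [mul_comm]

lemma sub_mem_unitSteps {x y : X d} (h : stepOK x y) : y - x ∈ unitSteps d := by
  set δ := y - x
  have hδ : ∑ i, (δ i).natAbs ≤ 1 := h
  by_cases hzero : δ = 0
  · rw [hzero]; exact Finset.mem_insert_self _ _
  obtain ⟨i, hi⟩ := Function.ne_iff.1 hzero
  simp only [Pi.zero_apply, ne_eq] at hi
  have hsingle : δ = Pi.single i (δ i) := by
    funext j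
    by_cases hji : j = i
    · subst hji; simp
    · have := Finset.add_le_sum (f := fun k => (δ k).natAbs) (fun _ _ => Nat.zero_le _)
        (Finset.mem_univ i) (Finset.mem_univ j) (Ne.symm hji)
      rw [Pi.single_eq_of_ne hji]
      omega
  have hunit : δ i = 1 ∨ δ i = -1 := by
    have := (Finset.single_le_sum (f := fun k => (δ k).natAbs) (fun _ _ => Nat.zero_le _)
      (Finset.mem_univ i)).trans hδ
    omega
  refine Finset.mem_insert_of_mem
    (Finset.mem_image.2 ⟨(i, decide (δ i = 1)), Finset.mem_univ _, ?_⟩)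
  rw [hsingle]
  rcases hunit with h1 | h1 <;> simp [h1]

def backSteps (b : ℤ) (N : ℕ) (γ : ℤ → X d) (j : Fin N) : X d := γ (b - j) - γ (b - j - 1)

lemma backSteps_mem {a b : ℤ} {γ : ℤ → X d} (hγ : Adm a b γ) :
    backSteps b (b - a).toNat γ ∈ Fintype.piFinset fun _ => unitSteps d := by
  refine Fintype.mem_piFinset.2 fun j => ?_
  have hj := j.2
  have := sub_mem_unitSteps (hγ (b - j - 1) (by omega) (by omega))
  simpa [backSteps] using this

lemma eqOn_of_backSteps_eq {a b : ℤ} {γ γ' : ℤ → X d} (hb : γ b = γ' b)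
    (h : backSteps b (b - a).toNat γ = backSteps b (b - a).toNat γ') :
    Set.EqOn γ γ' (Set.Icc a b) := by
  suffices ∀ j : ℕ, j ≤ (b - a).toNat → γ (b - j) = γ' (b - j) by
    rintro m ⟨ham, hmb⟩
    have := this (b - m).toNat (by omega)
    rwa [show b - ((b - m).toNat : ℤ) = m by omega] at this
  intro j
  induction j with
  | zero => simpa using hb
  | succ j ih =>
    intro hj
    have hstep := congrFun h ⟨j, by omega⟩
    simp only [backSteps] at hstep
    have := ih (by omega)
    rw [show b - ((j + 1 : ℕ) : ℤ) = b - j - 1 by push_cast; ring]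
    rw [this] at hstep
    exact sub_right_injective hstep

lemma card_le_pow_of_adm {a b : ℤ} (s : Finset (ℤ → X d)) (hadm : ∀ γ ∈ s, Adm a b γ)
    (hend : ∀ γ ∈ s, ∀ γ' ∈ s, γ b = γ' b)
    (hdet : ∀ γ ∈ s, ∀ γ' ∈ s, Set.EqOn γ γ' (Set.Icc a b) → γ = γ') :
    s.card ≤ (2 * d + 1) ^ (b - a).toNat := by
  calc s.card ≤ (Fintype.piFinset fun _ : Fin (b - a).toNat => unitSteps d).card :=
        Finset.card_le_card_of_injOn _ (fun γ hγ => backSteps_mem (hadm γ hγ))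
          fun γ hγ γ' hγ' h => hdet γ hγ γ' hγ' (eqOn_of_backSteps_eq (hend γ hγ γ' hγ') h)
    _ ≤ (2 * d + 1) ^ (b - a).toNat := by
        simpa using Nat.pow_le_pow_left card_unitSteps_le _

lemma eq_of_frozen {a b : ℤ} {γ γ' : ℤ → X d} (hγ : Frozen a b γ) (hγ' : Frozen a b γ')
    (hb : γ b = γ' b) (h : Set.EqOn γ γ' (Set.Icc a b)) : γ = γ' := by
  funext m
  rcases le_or_gt b m with hbm | hmb
  · rw [hγ.2 m hbm, hγ'.2 m hbm, hb]
  rcases le_or_gt a m with ham | hma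
  · exact h ⟨ham, hmb.le⟩
  rw [hγ.1 m hma.le, hγ'.1 m hma.le]
  rcases le_or_gt a b with hab | hba
  · exact h ⟨le_rfl, hab⟩
  · rw [hγ.2 a hba.le, hγ'.2 a hba.le, hb]

lemma paths_finite (a b : ℤ) (x : X d) :
    {γ : ℤ → X d | Adm a b γ ∧ Frozen a b γ ∧ γ b = x}.Finite :=
  Set.Finite.of_finite_image ((Fintype.piFinset fun _ => unitSteps d).finite_toSet.subset
      (Set.image_subset_iff.2 fun _ hγ => backSteps_mem hγ.1))
    fun _ hγ _ hγ' h => eq_of_frozen hγ.2.1 hγ'.2.1 (hγ.2.2.trans hγ'.2.2.symm)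
      (eqOn_of_backSteps_eq (hγ.2.2.trans hγ'.2.2.symm) h)

noncomputable def paths (a b : ℤ) (x : X d) : Finset (ℤ → X d) := (paths_finite a b x).toFinset

lemma mem_paths {a b : ℤ} {x : X d} {γ : ℤ → X d} :
    γ ∈ paths a b x ↔ Adm a b γ ∧ Frozen a b γ ∧ γ b = x :=
  (paths_finite a b x).mem_toFinset

lemma card_paths_le (a b : ℤ) (x : X d) :
    (paths a b x).card ≤ (2 * d + 1) ^ (b - a).toNat :=
  card_le_pow_of_adm _ (fun _ hγ => (mem_paths.1 hγ).1)
    (fun _ hγ _ hγ' => (mem_paths.1 hγ).2.2.trans (mem_paths.1 hγ').2.2.symm)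
    fun _ hγ _ hγ' h => eq_of_frozen (mem_paths.1 hγ).2.1 (mem_paths.1 hγ').2.1
      ((mem_paths.1 hγ).2.2.trans (mem_paths.1 hγ').2.2.symm) h

lemma Adm.mono {a b a' b' : ℤ} {γ : ℤ → X d} (hγ : Adm a b γ) (ha : a ≤ a') (hb : b' ≤ b) :
    Adm a' b' γ :=
  fun m hm1 hm2 => hγ m (ha.trans hm1) (hm2.trans_le hb)

lemma card_le_of_eqOn_Iic {a b c : ℤ} {y : X d} {s : Finset (ℤ → X d)}
    (hs : ∀ γ ∈ s, γ ∈ paths a c y) (hab : a ≤ b)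
    (hagree : ∀ γ ∈ s, ∀ γ' ∈ s, ∀ m ≤ b, γ m = γ' m) :
    s.card ≤ (2 * d + 1) ^ (c - b).toNat := by
  have hend : ∀ γ ∈ s, ∀ γ' ∈ s, γ c = γ' c := fun γ hγ γ' hγ' =>
    (mem_paths.1 (hs γ hγ)).2.2.trans (mem_paths.1 (hs γ' hγ')).2.2.symm
  refine card_le_pow_of_adm s (fun γ hγ => (mem_paths.1 (hs γ hγ)).1.mono hab le_rfl) hend
    fun γ hγ γ' hγ' h => eq_of_frozen (mem_paths.1 (hs γ hγ)).2.1 (mem_paths.1 (hs γ' hγ')).2.1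
      (hend γ hγ γ' hγ') fun m hm => ?_
  rcases le_or_gt m b with hmb | hbm
  · exact hagree γ hγ γ' hγ' m hmb
  · exact h ⟨hbm.le, hm.2⟩

lemma natAbs_sub_le_of_adm {a b m : ℤ} {γ : ℤ → X d} (hγ : Adm a b γ) (ham : a ≤ m) (i : Fin d) :
    ∀ j : ℕ, m + j ≤ b → (γ (m + j) i - γ m i).natAbs ≤ j := by
  intro j
  induction j with
  | zero => simp
  | succ j ih =>
    intro hj
    have hstep := (Finset.single_le_sum (f := fun i => (γ (m + j + 1) i - γ (m + j) i).natAbs)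
      (fun _ _ => Nat.zero_le _) (Finset.mem_univ i)).trans (hγ (m + j) (by omega) (by omega))
    have := ih (by omega)
    rw [Nat.cast_succ, ← add_assoc]
    omega

lemma nm_le_of_adm {a b m : ℤ} {γ : ℤ → X d} (hγ : Adm a b γ) (ham : a ≤ m) (hmb : m ≤ b)
    (hzero : γ m = 0) : nm (γ b) ≤ (b - m).toNat :=
  Finset.sup_le fun i _ => by
    have := natAbs_sub_le_of_adm hγ ham i (b - m).toNat (by omega)
    rwa [show m + ((b - m).toNat : ℤ) = b by omega, hzero, Pi.zero_apply, sub_zero] at this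

def splice (b : ℤ) (γ δ : ℤ → X d) (m : ℤ) : X d := if m ≤ b then γ m else δ m

lemma splice_of_le {b m : ℤ} (γ δ : ℤ → X d) (h : m ≤ b) : splice b γ δ m = γ m := if_pos h

lemma splice_of_lt {b m : ℤ} (γ δ : ℤ → X d) (h : b < m) : splice b γ δ m = δ m :=
  if_neg (not_le.2 h)

lemma splice_mem_paths {a b c : ℤ} {x : X d} {γ δ : ℤ → X d} (hab : a ≤ b) (hbc : b ≤ c)
    (hγ : Adm a b γ) (hγa : ∀ m ≤ a, γ m = γ a) (hδ : Adm b c δ) (hδc : ∀ m, c ≤ m → δ m = δ c)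
    (hb : γ b = δ b) (hx : δ c = x) : splice b γ δ ∈ paths a c x := by
  have hsplice : ∀ m, b ≤ m → splice b γ δ m = δ m := fun m hm => by
    rcases hm.lt_or_eq with h | rfl
    · exact splice_of_lt γ δ h
    · rw [splice_of_le γ δ le_rfl, hb]
  refine mem_paths.2 ⟨fun m hm1 hm2 => ?_, ⟨fun m hm => ?_, fun m hm => ?_⟩, ?_⟩
  · rcases lt_or_ge m b with hmb | hbm
    · rw [splice_of_le γ δ hmb.le, splice_of_le γ δ (by omega)]
      exact hγ m hm1 hmb
    · rw [hsplice m hbm, hsplice (m + 1) (by omega)]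
      exact hδ m hbm hm2
  · rw [splice_of_le γ δ (hm.trans hab), splice_of_le γ δ hab, hγa m hm]
  · rw [hsplice m (hbc.trans hm), hsplice c hbc, hδc m hm]
  · rw [hsplice c hbc, hx]

lemma Phi_congr {V : X d → ℝ} {ω : ℤ → Bool} {a b : ℤ} {γ γ' : ℤ → X d}
    (h : Set.EqOn γ γ' (Set.Ioc a b)) : Phi V ω a b γ = Phi V ω a b γ' :=
  Finset.sum_congr rfl fun m hm => by
    obtain ⟨h1, h2⟩ := Finset.mem_Icc.1 hm
    rw [h ⟨by omega, h2⟩]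

lemma Phi_add (V : X d → ℝ) (ω : ℤ → Bool) {a b c : ℤ} (hab : a ≤ b) (hbc : b ≤ c)
    (γ : ℤ → X d) : Phi V ω a b γ + Phi V ω b c γ = Phi V ω a c γ := by
  simp only [Phi, Finset.Icc_add_one_left_eq_Ioc]
  rw [← Finset.sum_union (Finset.Ioc_disjoint_Ioc_of_le le_rfl),
    Finset.Ioc_union_Ioc_eq_Ioc hab hbc]

end Paths

section Potential

variable {d : ℕ} {M₀ M₁ : ℝ} {V : X d → ℝ}

lemma mul_sgn_le_of_abs_le {v M : ℝ} (h : |v| ≤ M) (b : Bool) : v * sgn b ≤ M := by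
  have := abs_le.1 h
  cases b <;> simp only [sgn, Bool.false_eq_true, if_false, if_true] <;> linarith

lemma Phi_le_of_ne_zero (hV1 : ∀ x : X d, x ≠ 0 → |V x| ≤ M₁) (ω : ℤ → Bool) {b c : ℤ}
    {γ : ℤ → X d} (hne : ∀ m, b < m → m ≤ c → γ m ≠ 0) :
    Phi V ω b c γ ≤ (c - b).toNat * M₁ := by
  calc Phi V ω b c γ ≤ ∑ _m ∈ Finset.Icc (b + 1) c, M₁ :=
        Finset.sum_le_sum fun m hm => by
          obtain ⟨h1, h2⟩ := Finset.mem_Icc.1 hm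
          exact mul_sgn_le_of_abs_le (hV1 _ (hne m (by omega) h2)) _
    _ = (c - b).toNat * M₁ := by
        rw [Finset.sum_const, nsmul_eq_mul, Int.card_Icc, show c + 1 - (b + 1) = c - b by ring]

lemma sum_natAbs_e1_le_one : ∑ i, (e1 d i).natAbs ≤ 1 := by
  calc ∑ i, (e1 d i).natAbs = ∑ i : Fin d, if (i : ℕ) = 0 then 1 else 0 := by
        simp only [e1, apply_ite Int.natAbs]; rfl
    _ = ({i | (i : ℕ) = 0} : Finset (Fin d)).card := Finset.sum_boole _ _
    _ ≤ 1 := Finset.card_le_one.2 fun i hi j hj => by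
        simp only [Finset.mem_filter, Finset.mem_univ, true_and] at hi hj
        exact Fin.ext (hi.trans hj.symm)

lemma stepOK_of_eq_zero_or_e1 {x y : X d} (hx : x = 0 ∨ x = e1 d) (hy : y = 0 ∨ y = e1 d) :
    stepOK x y := by
  have h := sum_natAbs_e1_le_one (d := d)
  rcases hx with rfl | rfl <;> rcases hy with rfl | rfl <;> simp [stepOK, h]

lemma xi_le_mul_sgn_gstar (hd : 1 ≤ d) (hV0 : V 0 = M₀) (hV1 : ∀ x : X d, x ≠ 0 → |V x| ≤ M₁)
    (ω : ℤ → Bool) (m : ℤ) : xi M₀ M₁ ω m ≤ V (gstar d ω m) * sgn (ω m) := by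
  have he1 : e1 d ≠ 0 := fun h => by simpa [e1] using congrFun h ⟨0, hd⟩
  have := abs_le.1 (hV1 _ he1)
  cases h : ω m <;> simp [xi, gstar, sgn, h, hV0]
  linarith

lemma xi_sub_le_mul_sgn_zero (hV0 : V 0 = M₀) (hM : M₁ ≤ M₀) (ω : ℤ → Bool) (m : ℤ) :
    xi M₀ M₁ ω m - (M₀ - M₁) ≤ V 0 * sgn (ω m) := by
  cases h : ω m <;> simp [xi, sgn, h, hV0]
  linarith

def optimalTail (ω : ℤ → Bool) (b m : ℤ) : X d := if b < m ∧ m < 0 then gstar d ω m else 0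

lemma optimalTail_eq_zero_or_e1 (ω : ℤ → Bool) (b m : ℤ) :
    optimalTail (d := d) ω b m = 0 ∨ optimalTail ω b m = e1 d := by
  unfold optimalTail gstar
  split_ifs <;> simp

lemma Phi_optimalTail_ge (hd : 1 ≤ d) (hV0 : V 0 = M₀) (hV1 : ∀ x : X d, x ≠ 0 → |V x| ≤ M₁)
    (hM : M₁ ≤ M₀) (ω : ℤ → Bool) {b : ℤ} (hb : b < 0) :
    ∑ m ∈ Finset.Icc (b + 1) 0, xi M₀ M₁ ω m - (M₀ - M₁) ≤ Phi V ω b 0 (optimalTail ω b) := by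
  have hterm : ∀ m ∈ Finset.Icc (b + 1) 0, xi M₀ M₁ ω m - (if m = 0 then M₀ - M₁ else 0)
      ≤ V (optimalTail ω b m) * sgn (ω m) := fun m hm => by
    obtain ⟨h1, h2⟩ := Finset.mem_Icc.1 hm
    rcases h2.lt_or_eq with h2 | rfl
    · rw [if_neg h2.ne, sub_zero, optimalTail, if_pos ⟨by omega, h2⟩]
      exact xi_le_mul_sgn_gstar hd hV0 hV1 ω m
    · rw [if_pos rfl, optimalTail, if_neg (by omega)]
      exact xi_sub_le_mul_sgn_zero hV0 hM ω 0
  calc ∑ m ∈ Finset.Icc (b + 1) 0, xi M₀ M₁ ω m - (M₀ - M₁)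
      = ∑ m ∈ Finset.Icc (b + 1) 0, (xi M₀ M₁ ω m - if m = 0 then M₀ - M₁ else 0) := by
        rw [Finset.sum_sub_distrib, Finset.sum_ite_eq',
          if_pos (Finset.mem_Icc.2 ⟨by omega, le_rfl⟩)]
    _ ≤ Phi V ω b 0 (optimalTail ω b) := Finset.sum_le_sum hterm

end Potential

section PathSum

variable {d : ℕ} {M₀ M₁ : ℝ} {V : X d → ℝ} {ω : ℤ → Bool} {φ : X d → ℝ}

noncomputable def pathSum (V : X d → ℝ) (ω : ℤ → Bool) (u : X d → ℝ) (a b : ℤ) (x : X d) : ℝ :=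
  ∑ γ ∈ paths a b x, Real.exp (Phi V ω a b γ) * u (γ a)

lemma T_eq_pathSum (V : X d → ℝ) (ω : ℤ → Bool) (a b : ℤ) (u : X d → ℝ) (x : X d) :
    T V ω a b u x = ((2 * (d : ℝ) + 1) ^ (b - a))⁻¹ * pathSum V ω u a b x := by
  rw [T, pathSum, ← Finset.tsum_subtype]
  congr 1
  exact (Equiv.subtypeEquivRight fun γ => mem_paths.symm).tsum_eq
    fun γ => Real.exp (Phi V ω a b γ.1) * u (γ.1 a)

lemma pathSum_nonneg (hφ : ∀ x, 0 ≤ φ x) (a b : ℤ) (x : X d) : 0 ≤ pathSum V ω φ a b x :=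
  Finset.sum_nonneg fun _ _ => mul_nonneg (Real.exp_pos _).le (hφ _)

lemma le_pathSum_self (hφ : ∀ x, 0 ≤ φ x) (a : ℤ) : φ 0 ≤ pathSum V ω φ a a 0 := by
  have hconst : (fun _ => 0 : ℤ → X d) ∈ paths a a 0 :=
    mem_paths.2 ⟨fun _ h h' => absurd h' (not_lt.2 h), ⟨fun _ _ => rfl, fun _ _ => rfl⟩, rfl⟩
  have hPhi : Phi V ω a a (fun _ => 0) = 0 := Finset.sum_eq_zero fun m hm => by
    simp only [Finset.mem_Icc] at hm; omega
  simpa [pathSum, hPhi] using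
    Finset.single_le_sum (f := fun γ => Real.exp (Phi V ω a a γ) * φ (γ a))
      (fun γ _ => mul_nonneg (Real.exp_pos _).le (hφ _)) hconst

lemma pathSum_le_of_optimalTail (hd : 1 ≤ d) (hV0 : V 0 = M₀)
    (hV1 : ∀ x : X d, x ≠ 0 → |V x| ≤ M₁) (hM : M₁ ≤ M₀) (hφ : ∀ x, 0 ≤ φ x) {a b : ℤ}
    (hab : a ≤ b) (hb : b < 0) :
    pathSum V ω φ a b 0 ≤
      Real.exp (M₀ - M₁ - ∑ m ∈ Finset.Icc (b + 1) 0, xi M₀ M₁ ω m) * pathSum V ω φ a 0 0 := by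
  classical
  set τ : ℤ → X d := optimalTail ω b
  have hmem : ∀ γ ∈ paths a b 0, splice b γ τ ∈ paths a 0 0 := fun γ hγ => by
    obtain ⟨hadm, hfr, hγb⟩ := mem_paths.1 hγ
    refine splice_mem_paths hab hb.le hadm hfr.1
      (fun m _ _ => stepOK_of_eq_zero_or_e1 (optimalTail_eq_zero_or_e1 ω b m)
        (optimalTail_eq_zero_or_e1 ω b (m + 1))) (fun m hm => ?_) ?_ ?_
    · simp [τ, optimalTail, hm.not_gt]
    · simp [τ, optimalTail, hγb]
    · simp [τ, optimalTail]
  have hweight : ∀ γ ∈ paths a b 0, Real.exp (Phi V ω a b γ) * φ (γ a) ≤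
      Real.exp (M₀ - M₁ - ∑ m ∈ Finset.Icc (b + 1) 0, xi M₀ M₁ ω m) *
        (Real.exp (Phi V ω a 0 (splice b γ τ)) *
          φ (splice b γ τ a)) := fun γ _ => by
    have hleft : Phi V ω a b (splice b γ τ) = Phi V ω a b γ :=
      Phi_congr fun m hm => splice_of_le γ _ hm.2
    have hright : Phi V ω b 0 (splice b γ τ) = Phi V ω b 0 τ :=
      Phi_congr fun m hm => splice_of_lt γ _ hm.1
    have htail := Phi_optimalTail_ge hd hV0 hV1 hM ω hb (V := V)
    rw [splice_of_le γ _ hab, ← mul_assoc, ← Real.exp_add, ← Phi_add V ω hab hb.le, hleft, hright]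
    gcongr
    · exact hφ _
    · linarith
  have hfiber : ∀ δ ∈ paths a 0 0,
      {γ ∈ paths a b 0 | splice b γ τ = δ}.card ≤ 1 := fun δ _ =>
    Finset.card_le_one.2 fun γ hγ γ' hγ' => by
      obtain ⟨hpγ, rfl⟩ := Finset.mem_filter.1 hγ
      obtain ⟨hpγ', hsp⟩ := Finset.mem_filter.1 hγ'
      obtain ⟨-, hfr, hγb⟩ := mem_paths.1 hpγ
      obtain ⟨-, hfr', hγb'⟩ := mem_paths.1 hpγ'
      funext m
      rcases le_or_gt m b with hm | hm
      · simpa [splice_of_le _ _ hm] using congrFun hsp.symm m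
      · rw [hfr.2 m hm.le, hfr'.2 m hm.le, hγb, hγb']
  simpa [pathSum] using sum_le_mul_sum_of_card_fiber_le hmem hweight hfiber (Real.exp_pos _).le
    fun δ _ => mul_nonneg (Real.exp_pos _).le (hφ _)

/-- The number of steps back from time `0` to the last visit of `γ` to the origin, or `n + 1`
if `γ` avoids the origin during `[-n, 0]`. -/
def timeSinceZero (n : ℕ) (γ : ℤ → X d) : ℕ :=
  Nat.find (⟨n + 1, Or.inl rfl⟩ : ∃ k : ℕ, k = n + 1 ∨ γ (-k) = 0)

lemma timeSinceZero_le (n : ℕ) (γ : ℤ → X d) : timeSinceZero n γ ≤ n + 1 :=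
  Nat.find_min' _ (Or.inl rfl)

lemma apply_timeSinceZero {n : ℕ} {γ : ℤ → X d} (h : timeSinceZero n γ ≤ n) :
    γ (-(timeSinceZero n γ : ℤ)) = 0 :=
  (Nat.find_spec (⟨n + 1, Or.inl rfl⟩ : ∃ k : ℕ, k = n + 1 ∨ γ (-k) = 0)).resolve_left
    (by unfold timeSinceZero at h; omega)

lemma apply_ne_zero_of_lt_timeSinceZero {n j : ℕ} {γ : ℤ → X d} (h : j < timeSinceZero n γ) :
    γ (-(j : ℤ)) ≠ 0 :=
  fun h0 => Nat.find_min _ h (Or.inr h0)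

lemma lt_timeSinceZero {n r : ℕ} {γ : ℤ → X d} (hγ : Adm (-n) 0 γ) (hr : r ≤ n)
    (hfar : r < nm (γ 0)) : r < timeSinceZero n γ := by
  by_contra! h
  have := nm_le_of_adm hγ (by omega) (by omega) (apply_timeSinceZero (h.trans hr))
  omega

lemma Phi_le_of_le_timeSinceZero (hV1 : ∀ x : X d, x ≠ 0 → |V x| ≤ M₁) {n j : ℕ}
    {γ : ℤ → X d} (hj : j ≤ timeSinceZero n γ) : Phi V ω (-j) 0 γ ≤ j * M₁ := by
  have := Phi_le_of_ne_zero hV1 ω (b := -j) (c := 0) (γ := γ) fun m h1 h2 => by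
    have := apply_ne_zero_of_lt_timeSinceZero (n := n) (j := (-m).toNat) (γ := γ) (by omega)
    rwa [show -(((-m).toNat : ℕ) : ℤ) = m by omega] at this
  rwa [show (0 - -(j : ℤ)).toNat = j by omega] at this

lemma sum_timeSinceZero_eq_le (hV1 : ∀ x : X d, x ≠ 0 → |V x| ≤ M₁) (hφ : ∀ x, 0 ≤ φ x)
    {n k : ℕ} (hk : k ≤ n) (y : X d) :
    ∑ γ ∈ paths (-n) 0 y with timeSinceZero n γ = k, Real.exp (Phi V ω (-n) 0 γ) * φ (γ (-n)) ≤
      (2 * d + 1) ^ k * Real.exp (k * M₁) * pathSum V ω φ (-n) (-k) 0 := by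
  classical
  set F := {γ ∈ paths (-n) 0 y | timeSinceZero n γ = k}
  have hmem : ∀ γ ∈ F, splice (-k) γ (fun _ => γ (-k)) ∈ paths (-n) (-k) 0 := fun γ hγ => by
    obtain ⟨hpγ, rfl⟩ := Finset.mem_filter.1 hγ
    obtain ⟨hadm, hfr, -⟩ := mem_paths.1 hpγ
    exact splice_mem_paths (by omega) le_rfl (hadm.mono le_rfl (by omega)) hfr.1
      (fun _ _ _ => by simp [stepOK]) (fun _ _ => rfl) rfl (apply_timeSinceZero hk)
  have hweight : ∀ γ ∈ F, Real.exp (Phi V ω (-n) 0 γ) * φ (γ (-n)) ≤ Real.exp (k * M₁) *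
      (Real.exp (Phi V ω (-n) (-k) (splice (-k) γ (fun _ => γ (-k)))) *
        φ (splice (-k) γ (fun _ => γ (-k)) (-n))) := fun γ hγ => by
    have htail := Phi_le_of_le_timeSinceZero hV1 (ω := ω) (Finset.mem_filter.1 hγ).2.ge
    rw [splice_of_le _ _ (by omega), Phi_congr (γ' := γ) (fun m hm => splice_of_le γ _ hm.2),
      ← Phi_add V ω (b := -k) (by omega) (by omega) γ, Real.exp_add, mul_comm (Real.exp _),
      mul_assoc]
    exact mul_le_mul_of_nonneg_right (Real.exp_le_exp.2 htail)
      (mul_nonneg (Real.exp_pos _).le (hφ _))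
  have hfiber : ∀ δ ∈ paths (-n) (-k) 0,
      {γ ∈ F | splice (-k) γ (fun _ => γ (-k)) = δ}.card ≤ (2 * d + 1) ^ k := fun δ _ => by
    have := card_le_of_eqOn_Iic (s := {γ ∈ F | splice (-k) γ (fun _ => γ (-k)) = δ})
      (fun γ hγ => (Finset.mem_filter.1 (Finset.mem_filter.1 hγ).1).1) (by omega : -(n : ℤ) ≤ -k)
      fun γ hγ γ' hγ' m hm => by
        have := congrFun ((Finset.mem_filter.1 hγ).2.trans (Finset.mem_filter.1 hγ').2.symm) m
        rwa [splice_of_le _ _ hm, splice_of_le _ _ hm] at this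
    rwa [show (0 - -(k : ℤ)).toNat = k by omega] at this
  simpa [pathSum] using sum_le_mul_sum_of_card_fiber_le hmem hweight hfiber (Real.exp_pos _).le
    fun δ _ => mul_nonneg (Real.exp_pos _).le (hφ _)

lemma sum_timeSinceZero_eq_succ_le (hV1 : ∀ x : X d, x ≠ 0 → |V x| ≤ M₁) {c : ℝ}
    (hφ : φ ∈ Fset d c) (n : ℕ) (y : X d) :
    ∑ γ ∈ paths (-n) 0 y with timeSinceZero n γ = n + 1,
        Real.exp (Phi V ω (-n) 0 γ) * φ (γ (-n)) ≤
      (2 * d + 1) ^ n * Real.exp (n * M₁) * (c * φ 0) := by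
  have hterm : ∀ γ ∈ {γ ∈ paths (-n) 0 y | timeSinceZero n γ = n + 1},
      Real.exp (Phi V ω (-n) 0 γ) * φ (γ (-n)) ≤ Real.exp (n * M₁) * (c * φ 0) := fun γ hγ =>
    mul_le_mul (Real.exp_le_exp.2 (Phi_le_of_le_timeSinceZero hV1
      ((Nat.le_succ n).trans (Finset.mem_filter.1 hγ).2.ge))) (hφ.2 _) (hφ.1 _) (Real.exp_pos _).le
  have hcard : ({γ ∈ paths (-n) 0 y | timeSinceZero n γ = n + 1}.card : ℝ) ≤ (2 * d + 1) ^ n := by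
    have := (Finset.card_filter_le (paths (-n) 0 y) (timeSinceZero n · = n + 1)).trans
      (card_paths_le (-n) 0 y)
    rw [show (0 - -(n : ℤ)).toNat = n by omega] at this
    exact_mod_cast this
  calc _ ≤ _ := Finset.sum_le_card_nsmul _ _ _ hterm
    _ ≤ (2 * d + 1) ^ n * (Real.exp (n * M₁) * (c * φ 0)) := by
        rw [nsmul_eq_mul]
        exact mul_le_mul_of_nonneg_right hcard
          (mul_nonneg (Real.exp_pos _).le ((hφ.1 0).trans (hφ.2 0)))
    _ = _ := by ring

lemma pow_mul_exp_le {lam S : ℝ} {k : ℕ}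
    (hS : k * (M₁ + lam + Real.log (2 * (d : ℝ) + 1)) < S) :
    (2 * (d : ℝ) + 1) ^ k * Real.exp (k * M₁) * Real.exp (M₀ - M₁ - S) ≤
      Real.exp (M₀ - M₁) * Real.exp (-lam) ^ k := by
  rw [← Real.exp_log (by positivity : (0 : ℝ) < 2 * d + 1), ← Real.exp_nat_mul,
    ← Real.exp_nat_mul, ← Real.exp_add, ← Real.exp_add, ← Real.exp_add]
  exact Real.exp_le_exp.2 (by linarith)

lemma pow_mul_exp_mul_pathSum_le (hd : 1 ≤ d) (hV0 : V 0 = M₀)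
    (hV1 : ∀ x : X d, x ≠ 0 → |V x| ≤ M₁) (hM : M₁ ≤ M₀) (hφ : ∀ x, 0 ≤ φ x) {lam : ℝ}
    {n k : ℕ} (hk : 1 ≤ k) (hkn : k ≤ n)
    (hS : k * (M₁ + lam + Real.log (2 * (d : ℝ) + 1)) <
      ∑ m ∈ Finset.Icc (-(k : ℤ) + 1) 0, xi M₀ M₁ ω m) :
    (2 * d + 1) ^ k * Real.exp (k * M₁) * pathSum V ω φ (-n) (-k) 0 ≤
      Real.exp (M₀ - M₁) * Real.exp (-lam) ^ k * pathSum V ω φ (-n) 0 0 :=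
  calc _ ≤ (2 * d + 1) ^ k * Real.exp (k * M₁) *
        (Real.exp (M₀ - M₁ - ∑ m ∈ Finset.Icc (-(k : ℤ) + 1) 0, xi M₀ M₁ ω m) *
          pathSum V ω φ (-n) 0 0) := by
        gcongr
        exact pathSum_le_of_optimalTail hd hV0 hV1 hM hφ (by omega) (by omega)
    _ ≤ _ := by
        rw [← mul_assoc]
        exact mul_le_mul_of_nonneg_right (pow_mul_exp_le hS) (pathSum_nonneg hφ _ _ _)

lemma pathSum_le_of_lt_nm {lam c : ℝ} {r n : ℕ} (hd : 1 ≤ d) (hV0 : V 0 = M₀)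
    (hV1 : ∀ x : X d, x ≠ 0 → |V x| ≤ M₁) (hM : M₁ ≤ M₀) (hlam : 0 < lam)
    (hxi : ∀ k : ℕ, r ≤ k → (k : ℝ) * (M₁ + lam + Real.log (2 * (d : ℝ) + 1)) <
      ∑ m ∈ Finset.Icc (-(k : ℤ) + 1) 0, xi M₀ M₁ ω m)
    (hc : 1 ≤ c) (hφ : φ ∈ Fset d c) (hn : Real.log c / lam + r + 1 < n) {y : X d}
    (hy : r < nm y) :
    pathSum V ω φ (-n) 0 y ≤
      Real.exp (M₀ - M₁) * (∑ k ∈ Finset.Icc (r + 1) n, Real.exp (-lam) ^ k +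
        Real.exp (-lam) ^ (r + 1)) * pathSum V ω φ (-n) 0 0 := by
  set x := Real.exp (-lam)
  set W := pathSum V ω φ (-n) 0 0
  have hrn : r + 1 < n := by
    have := div_nonneg (Real.log_nonneg hc) hlam.le
    exact_mod_cast (show (r : ℝ) + 1 < n by linarith)
  have hcx : c * x ^ n ≤ x ^ (r + 1) := by
    have := (div_lt_iff₀ hlam).1 (show Real.log c / lam < n - r - 1 by linarith)
    rw [← Real.exp_log (by linarith : 0 < c), ← Real.exp_nat_mul, ← Real.exp_nat_mul,
      ← Real.exp_add]
    exact Real.exp_le_exp.2 (by push_cast; nlinarith)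
  have havoid : ∑ γ ∈ paths (-n) 0 y with timeSinceZero n γ = n + 1,
      Real.exp (Phi V ω (-n) 0 γ) * φ (γ (-n)) ≤ Real.exp (M₀ - M₁) * x ^ (r + 1) * W :=
    calc _ ≤ (2 * d + 1) ^ n * Real.exp (n * M₁) * (c * φ 0) :=
          sum_timeSinceZero_eq_succ_le hV1 hφ n y
      _ ≤ c * ((2 * d + 1) ^ n * Real.exp (n * M₁) * pathSum V ω φ (-n) (-n) 0) := by
          rw [mul_left_comm c]
          exact mul_le_mul_of_nonneg_left (mul_le_mul_of_nonneg_left (le_pathSum_self hφ.1 _)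
            (by linarith)) (by positivity)
      _ ≤ c * (Real.exp (M₀ - M₁) * x ^ n * W) := mul_le_mul_of_nonneg_left
          (pow_mul_exp_mul_pathSum_le hd hV0 hV1 hM hφ.1 (by omega) le_rfl (hxi n (by omega)))
          (by linarith)
      _ = Real.exp (M₀ - M₁) * (c * x ^ n) * W := by ring
      _ ≤ _ := mul_le_mul_of_nonneg_right (mul_le_mul_of_nonneg_left hcx (Real.exp_pos _).le)
          (pathSum_nonneg hφ.1 _ _ _)
  rw [pathSum, ← Finset.sum_fiberwise_of_maps_to (g := timeSinceZero n)
    (t := Finset.Icc (r + 1) (n + 1)) fun γ hγ => Finset.mem_Icc.2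
      ⟨lt_timeSinceZero (mem_paths.1 hγ).1 (by omega) ((mem_paths.1 hγ).2.2 ▸ hy),
        timeSinceZero_le n γ⟩, Finset.sum_Icc_succ_top (by omega)]
  calc _ ≤ ∑ k ∈ Finset.Icc (r + 1) n, Real.exp (M₀ - M₁) * x ^ k * W +
        Real.exp (M₀ - M₁) * x ^ (r + 1) * W := by
        refine add_le_add (Finset.sum_le_sum fun k hk => ?_) havoid
        obtain ⟨hk1, hk2⟩ := Finset.mem_Icc.1 hk
        exact (sum_timeSinceZero_eq_le hV1 hφ.1 hk2 y).trans
          (pow_mul_exp_mul_pathSum_le hd hV0 hV1 hM hφ.1 (by omega) hk2 (hxi k (by omega)))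
    _ = _ := by rw [← Finset.sum_mul, ← Finset.mul_sum]; ring

end PathSum

lemma sum_Icc_pow_add_pow_le {x : ℝ} (hx0 : 0 ≤ x) (hx1 : x < 1) (m n : ℕ) :
    ∑ k ∈ Finset.Icc m n, x ^ k + x ^ m ≤ 2 * (x ^ m / (1 - x)) := by
  have h1 := geom_sum_Ico_le_of_lt_one (m := m) (n := n + 1) hx0 hx1
  rw [Finset.Ico_add_one_right_eq_Icc] at h1
  linarith [le_div_self (pow_nonneg hx0 m) (by linarith : 0 < 1 - x) (by linarith)]

theorem statement2_general
    (d : ℕ) (hd : 1 ≤ d) (M₀ M₁ : ℝ) (hM₁ : 0 ≤ M₁)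
    (lam : ℝ) (hlam : 0 < lam)
    (hlam' : lam < (M₀ - 3 * M₁) / 2 - Real.log (2 * (d : ℝ) + 1)) :
    ∃ K₁ : ℝ, 1 ≤ K₁ ∧
      ∀ (V : X d → ℝ), V 0 = M₀ → (∀ x : X d, x ≠ 0 → |V x| ≤ M₁) →
      ∀ (ω : ℤ → Bool) (r : ℕ),
        (∀ k : ℕ, r ≤ k →
          (k : ℝ) * (M₁ + lam + Real.log (2 * (d : ℝ) + 1)) <
            ∑ m ∈ Finset.Icc (-(k : ℤ) + 1) 0, xi M₀ M₁ ω m) →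
        ∀ c : ℝ, 1 ≤ c → ∀ φ ∈ Fset d c, ∀ n : ℕ,
          Real.log c / lam + r + 1 < (n : ℝ) →
          ∀ y : X d, r < nm y →
            T V ω (-(n : ℤ)) 0 φ y ≤
              2 * K₁ * Real.exp (-lam * (r + 1)) * T V ω (-(n : ℤ)) 0 φ 0 := by
  have hM : M₁ ≤ M₀ := by
    have := Real.log_nonneg (by linarith [(Nat.cast_nonneg d : (0 : ℝ) ≤ d)] :
      (1 : ℝ) ≤ 2 * d + 1)
    linarith
  set x := Real.exp (-lam)
  have hx : x < 1 := Real.exp_lt_one_iff.2 (by linarith)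
  refine ⟨Real.exp (M₀ - M₁) / (1 - x), ?_, fun V hV0 hV1 ω r hxi c hc φ hφ n hn y hy => ?_⟩
  · rw [le_div_iff₀ (by linarith)]
    linarith [Real.one_le_exp (by linarith : 0 ≤ M₀ - M₁), (Real.exp_pos (-lam)).le]
  rw [T_eq_pathSum, T_eq_pathSum, show Real.exp (-lam * (r + 1)) = x ^ (r + 1) by
    rw [← Real.exp_nat_mul]; push_cast; ring_nf]
  have hfar := pathSum_le_of_lt_nm hd hV0 hV1 hM hlam hxi hc hφ hn hy
  have hgeom := sum_Icc_pow_add_pow_le (Real.exp_pos (-lam)).le hx (r + 1) n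
  have hW := pathSum_nonneg hφ.1 (V := V) (ω := ω) (-n) 0 0
  calc _ ≤ ((2 * (d : ℝ) + 1) ^ (0 - -(n : ℤ)))⁻¹ *
        (Real.exp (M₀ - M₁) * (2 * (x ^ (r + 1) / (1 - x))) * pathSum V ω φ (-n) 0 0) := by
        gcongr
        exact hfar.trans (by gcongr)
    _ = _ := by ring

/-- Lemma 3.2 (initialization in the past). -/
theorem statement2
    (d : ℕ) (hd : 1 ≤ d) (M₀ M₁ : ℝ) (hM₀ : 0 ≤ M₀) (hM₁ : 0 ≤ M₁)
    (hl0 : 0 < (M₀ - 3 * M₁) / 2 - Real.log (2 * (d : ℝ) + 1))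
    (lam : ℝ) (hlam : 0 < lam)
    (hlam' : lam < (M₀ - 3 * M₁) / 2 - Real.log (2 * (d : ℝ) + 1)) :
    ∃ K₁ : ℝ, 1 ≤ K₁ ∧
      ∀ (V : X d → ℝ), V 0 = M₀ → (∀ x : X d, x ≠ 0 → |V x| ≤ M₁) →
      ∀ (ω : ℤ → Bool) (r : ℕ),
        (∀ k : ℕ, r ≤ k →
          (k : ℝ) * (M₁ + lam + Real.log (2 * (d : ℝ) + 1)) <
            ∑ m ∈ Finset.Icc (-(k : ℤ) + 1) 0, xi M₀ M₁ ω m) →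
        ∀ c : ℝ, 1 ≤ c → ∀ φ ∈ Fset d c, ∀ n : ℕ,
          Real.log c / lam + r + 1 < (n : ℝ) →
          ∀ y : X d, r < nm y →
            T V ω (-(n : ℤ)) 0 φ y ≤
              2 * K₁ * Real.exp (-lam * (r + 1)) * T V ω (-(n : ℤ)) 0 φ 0 :=
  statement2_general d hd M₀ M₁ hM₁ lam hlam hlam'

end BKpaper
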